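/- arXiv:0804.1687 — 2 statements merged into one kernel-verified Lean document; each statement's English description precedes it below -/
import Mathlib

section
/- Let K be a field and f ∈ K(x) in normal form, and suppose f = g∘h with g, h ∈ K(x) nonconstant. Then there exists a unit u ∈ K(x), with compositional inverse u⁻¹, such that g∘u⁻¹ and u∘h are both in normal form and f = (g∘u⁻¹)∘(u∘h). -/
open Polynomial

/-- The degree of a rational function. -/
noncomputable def RatFunc.deg {K : Type*} [Field K] (f : RatFunc K) : ℕ :=
  max f.num.natDegree f.denom.natDegree

/-- Composition of rational functions: `g.comp h = g ∘ h`. -/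
noncomputable def RatFunc.comp {K : Type*} [Field K] (g h : RatFunc K) : RatFunc K :=
  (Polynomial.aeval h g.num) / (Polynomial.aeval h g.denom)

/-- A rational function is in normal form if the degree of its numerator is larger than
the degree of its denominator and `0` is a root of the numerator. -/
def RatFunc.IsNormalForm {K : Type*} [Field K] (f : RatFunc K) : Prop :=
  f.denom.natDegree < f.num.natDegree ∧ f.num.eval 0 = 0

/-!
Read rational functions as maps of `ℙ¹`: `f` is in normal form iff `f(0) = 0` and
`f(∞) = ∞`. In homogeneous coordinates, the value of `g ∘ h` at `0` (resp. `∞`) is obtained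
by evaluating the homogenized numerator and denominator of `g` at `h(0)` (resp. `h(∞)`), and
these two binary forms have no common nontrivial zero. Hence `g(h(0)) = 0` and `g(h(∞)) = ∞`
force `h(0) ≠ h(∞)`, so a Möbius transformation `u` sends `h(0) ↦ 0` and `h(∞) ↦ ∞`, and
`u ∘ h` is in normal form. The same computation, read backwards, shows that `g ∘ u⁻¹`
sends `0 = (u ∘ h)(0) ↦ f(0) = 0` and `∞ ↦ ∞`. Composition is associative because composing
with a nonconstant, hence transcendental, `h` is a `K`-algebra endomorphism of `K(x)`.
-/

namespace Polynomial

section CommSemiring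

variable {R : Type*} [CommSemiring R]

theorem aeval_homogenize_eq_sum {A : Type*} [CommSemiring A] [Algebra R A] (r : R[X]) (n : ℕ)
    (x : Fin 2 → A) :
    MvPolynomial.aeval x (r.homogenize n)
      = ∑ k ∈ Finset.range (n + 1), algebraMap R A (r.coeff k) * x 0 ^ k * x 1 ^ (n - k) := by
  simp [homogenize, Finset.Nat.sum_antidiagonal_eq_sum_range_succ_mk, MvPolynomial.aeval_monomial,
    Finsupp.prod_fintype, mul_assoc]

theorem eval_homogenize_of_eq_zero (r : R[X]) (n : ℕ) {x : Fin 2 → R} (hx : x 1 = 0) :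
    MvPolynomial.eval x (r.homogenize n) = r.coeff n * x 0 ^ n := by
  rw [← MvPolynomial.aeval_eq_eval, aeval_homogenize_eq_sum, Finset.sum_eq_single n]
  · simp
  · intro k hk hkn
    have : n - k ≠ 0 := by rw [Finset.mem_range] at hk; omega
    simp [hx, zero_pow this]
  · simp

theorem eval_zero_mvPolynomial_aeval (F : MvPolynomial (Fin 2) R) (p q : R[X]) :
    (MvPolynomial.aeval ![p, q] F).eval 0 = MvPolynomial.eval ![p.eval 0, q.eval 0] F := by
  rw [← coe_aeval_eq_eval, MvPolynomial.comp_aeval_apply, ← MvPolynomial.aeval_eq_eval]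
  congr 2
  funext i
  fin_cases i <;> simp

variable (r : R[X]) (n : ℕ) {d : ℕ} {p q : R[X]}

theorem natDegree_aeval_homogenize_le (hp : p.natDegree ≤ d) (hq : q.natDegree ≤ d) :
    (MvPolynomial.aeval ![p, q] (r.homogenize n)).natDegree ≤ n * d := by
  rw [aeval_homogenize_eq_sum]
  refine natDegree_sum_le_of_forall_le _ _ fun k hk => ?_
  have hkn : k ≤ n := Nat.lt_succ_iff.mp (Finset.mem_range.mp hk)
  calc _ ≤ k * d + (n - k) * d := by
        rw [algebraMap_eq, mul_assoc]
        exact (natDegree_C_mul_le _ _).trans <| natDegree_mul_le_of_le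
          (natDegree_pow_le_of_le k hp) (natDegree_pow_le_of_le (n - k) hq)
    _ = n * d := by rw [← add_mul, Nat.add_sub_cancel' hkn]

theorem coeff_aeval_homogenize (hp : p.natDegree ≤ d) (hq : q.natDegree ≤ d) :
    (MvPolynomial.aeval ![p, q] (r.homogenize n)).coeff (n * d)
      = MvPolynomial.eval ![p.coeff d, q.coeff d] (r.homogenize n) := by
  rw [aeval_homogenize_eq_sum, ← MvPolynomial.aeval_eq_eval, aeval_homogenize_eq_sum,
    finsetSum_coeff]
  simp only [Matrix.cons_val_zero, Matrix.cons_val_one, Algebra.algebraMap_self, RingHom.id_apply]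
  refine Finset.sum_congr rfl fun k hk => ?_
  have hkn : k ≤ n := Nat.lt_succ_iff.mp (Finset.mem_range.mp hk)
  have hnd : n * d = k * d + (n - k) * d := by rw [← add_mul, Nat.add_sub_cancel' hkn]
  rw [algebraMap_eq, mul_assoc, coeff_C_mul, hnd, coeff_mul_add_eq_of_natDegree_le
    (natDegree_pow_le_of_le k hp) (natDegree_pow_le_of_le (n - k) hq),
    coeff_pow_of_natDegree_le hp, coeff_pow_of_natDegree_le hq, mul_assoc]

end CommSemiring

theorem natDegree_lt_of_coeff_eq_zero {R : Type*} [Semiring R] {p : R[X]} {n : ℕ} (hp : p ≠ 0)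
    (hn : p.natDegree ≤ n) (hc : p.coeff n = 0) : p.natDegree < n :=
  hn.lt_of_ne fun h => hp (leadingCoeff_eq_zero.mp (by rwa [leadingCoeff, h]))

theorem C_mul_X_add_C_ne_zero {R : Type*} [Semiring R] {c d : R} (hcd : c ≠ 0 ∨ d ≠ 0) :
    C c * X + C d ≠ 0 := by
  intro h
  have h1 := congr_arg (coeff · 1) h
  have h0 := congr_arg (coeff · 0) h
  simp at h0 h1
  tauto

section Field

variable {K : Type*} [Field K]

theorem aeval_homogenize_of_ne_zero {L : Type*} [Field L] [Algebra K L] {r : K[X]} {n : ℕ}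
    (hr : r.natDegree ≤ n) {x : Fin 2 → L} (hx : x 1 ≠ 0) :
    MvPolynomial.aeval x (r.homogenize n) = aeval (x 0 / x 1) r * x 1 ^ n := by
  rw [MvPolynomial.aeval_def, ← MvPolynomial.eval_map, ← homogenize_map,
    eval_homogenize ((natDegree_map_le).trans hr) x hx, eval_map_algebraMap]

theorem isCoprime_C_mul_X_add_C {a b c d : K} (hdet : a * d - b * c ≠ 0) :
    IsCoprime (C a * X + C b) (C c * X + C d) := by
  refine ⟨C (-c * (a * d - b * c)⁻¹), C (a * (a * d - b * c)⁻¹), ?_⟩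
  rw [← C_1, ← mul_inv_cancel₀ hdet]
  simp only [map_mul, map_neg, map_sub]
  ring

end Field

end Polynomial

namespace RatFunc

variable {K : Type*} [Field K]

theorem transcendental_of_one_le_deg {h : RatFunc K} (hh : 1 ≤ h.deg) : Transcendental K h := by
  refine h.transcendental_of_ne_C ?_
  rintro ⟨c, rfl⟩
  simp [deg, num_C, denom_C] at hh

theorem one_le_deg_of_isNormalForm {f : RatFunc K} (hf : f.IsNormalForm) : 1 ≤ f.deg :=
  le_max_of_le_left (Nat.one_le_of_lt hf.1)

theorem natDegree_num_le_deg (g : RatFunc K) : g.num.natDegree ≤ g.deg := le_max_left _ _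

theorem natDegree_denom_le_deg (g : RatFunc K) : g.denom.natDegree ≤ g.deg := le_max_right _ _

noncomputable def compAlgHom (h : RatFunc K) (hh : Transcendental K h) :
    RatFunc K →ₐ[K] RatFunc K :=
  liftAlgHom (aeval h) <|
    nonZeroDivisors_le_comap_nonZeroDivisors_of_injective _ (transcendental_iff_injective.mp hh)

theorem compAlgHom_apply {h : RatFunc K} (hh : Transcendental K h) (g : RatFunc K) :
    compAlgHom h hh g = g.comp h :=
  liftAlgHom_apply _ _ g

theorem div_comp {h : RatFunc K} (hh : Transcendental K h) (p q : K[X]) :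
    (algebraMap K[X] (RatFunc K) p / algebraMap K[X] (RatFunc K) q).comp h
      = aeval h p / aeval h q := by
  rw [← compAlgHom_apply hh]
  exact liftAlgHom_apply_div _ _ p q

theorem X_comp (h : RatFunc K) : X.comp h = h := by
  simp [comp, num_X, denom_X]

theorem transcendental_comp {v w : RatFunc K} (hv : Transcendental K v)
    (hw : Transcendental K w) : Transcendental K (v.comp w) := by
  rw [← compAlgHom_apply hw]
  exact mt (isAlgebraic_algHom_iff _ (compAlgHom w hw).toRingHom.injective).mp hv

theorem comp_assoc (g : RatFunc K) {v w : RatFunc K} (hv : Transcendental K v)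
    (hw : Transcendental K w) : (g.comp v).comp w = g.comp (v.comp w) := by
  suffices (compAlgHom w hw).comp (compAlgHom v hv)
      = compAlgHom (v.comp w) (transcendental_comp hv hw) by
    simpa only [AlgHom.comp_apply, compAlgHom_apply] using congr($this g)
  refine IsLocalization.algHom_ext (nonZeroDivisors K[X]) (Polynomial.algHom_ext ?_)
  simp [compAlgHom_apply, X_comp, Algebra.algHom]

theorem exists_eq_num_mul_of_eq_div {f : RatFunc K} {p q : K[X]} (hq : q ≠ 0)
    (hf : f = algebraMap K[X] (RatFunc K) p / algebraMap K[X] (RatFunc K) q) :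
    ∃ e : K[X], p = f.num * e ∧ q = f.denom * e := by
  have key : f.num * q = p * f.denom := (num_mul_eq_mul_denom_iff hq).mpr hf
  obtain ⟨e, he⟩ : f.denom ∣ q :=
    f.isCoprime_num_denom.symm.dvd_of_dvd_mul_left ⟨p, by rw [key, mul_comm]⟩
  refine ⟨e, mul_left_cancel₀ f.denom_ne_zero ?_, he⟩
  rw [mul_comm, ← key, he]
  ring

theorem deg_div_of_isCoprime {p q : K[X]} (hpq : IsCoprime p q) (hq : q ≠ 0) :
    (algebraMap K[X] (RatFunc K) p / algebraMap K[X] (RatFunc K) q).deg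
      = max p.natDegree q.natDegree := by
  set f := algebraMap K[X] (RatFunc K) p / algebraMap K[X] (RatFunc K) q
  obtain ⟨e, hp, hq'⟩ := exists_eq_num_mul_of_eq_div (f := f) hq rfl
  obtain ⟨r, hr, rfl⟩ := Polynomial.isUnit_iff.mp <|
    hpq.isUnit_of_dvd' (Dvd.intro_left _ hp.symm) (Dvd.intro_left _ hq'.symm)
  rw [hp, hq', natDegree_mul_C hr.ne_zero, natDegree_mul_C hr.ne_zero, deg]

theorem isNormalForm_of_eq_div {f : RatFunc K} {p q : K[X]}
    (hf : f = algebraMap K[X] (RatFunc K) p / algebraMap K[X] (RatFunc K) q)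
    (hp : p.eval 0 = 0) (hq : q.eval 0 ≠ 0) (hpq : q.natDegree < p.natDegree) :
    f.IsNormalForm := by
  obtain ⟨e, rfl, rfl⟩ := exists_eq_num_mul_of_eq_div (fun h0 => hq (by simp [h0])) hf
  rw [Polynomial.eval_mul] at hp hq
  have he : e ≠ 0 := fun h0 => hq (by simp [h0])
  rw [natDegree_mul f.denom_ne_zero he] at hpq
  exact ⟨by linarith [natDegree_mul_le (p := f.num) (q := e)],
    (mul_eq_zero.mp hp).resolve_right (right_ne_zero_of_mul hq)⟩

theorem IsNormalForm.eval_eq_zero_and_natDegree_lt {f : RatFunc K} (hf : f.IsNormalForm)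
    {p q : K[X]} (hq : q ≠ 0)
    (hfpq : f = algebraMap K[X] (RatFunc K) p / algebraMap K[X] (RatFunc K) q) :
    p.eval 0 = 0 ∧ q.natDegree < p.natDegree := by
  obtain ⟨e, rfl, rfl⟩ := exists_eq_num_mul_of_eq_div hq hfpq
  have hnum : f.num ≠ 0 := fun h0 => by simpa [h0] using hf.1
  have he : e ≠ 0 := right_ne_zero_of_mul hq
  rw [Polynomial.eval_mul, hf.2, zero_mul, natDegree_mul hnum he, natDegree_mul f.denom_ne_zero he]
  exact ⟨rfl, by linarith [hf.1]⟩

noncomputable def mobius (a b c d : K) : RatFunc K :=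
  algebraMap K[X] (RatFunc K) (Polynomial.C a * Polynomial.X + Polynomial.C b)
    / algebraMap K[X] (RatFunc K) (Polynomial.C c * Polynomial.X + Polynomial.C d)

section Mobius

variable {a b c d : K}

theorem deg_mobius (hdet : a * d - b * c ≠ 0) : (mobius a b c d).deg = 1 := by
  have hcd : c ≠ 0 ∨ d ≠ 0 := by
    by_contra! h
    simp [h] at hdet
  rw [mobius, deg_div_of_isCoprime (isCoprime_C_mul_X_add_C hdet) (C_mul_X_add_C_ne_zero hcd)]
  have := natDegree_linear_le (a := a) (b := b)
  have := natDegree_linear_le (a := c) (b := d)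
  rcases eq_or_ne c 0 with rfl | hc
  · have ha : a ≠ 0 := by rintro rfl; simp at hdet
    rw [natDegree_linear ha]
    omega
  · rw [natDegree_linear hc]
    omega

theorem mobius_comp {h : RatFunc K} (hh : Transcendental K h) :
    (mobius a b c d).comp h = (C a * h + C b) / (C c * h + C d) := by
  rw [mobius, div_comp hh]
  simp

theorem mobius_comp_mobius (hdet : a * d - b * c ≠ 0) :
    (mobius a b c d).comp (mobius d (-b) (-c) a) = X := by
  have hdet' : d * a - -b * -c ≠ 0 := fun h0 => hdet (by linear_combination h0)
  rw [mobius_comp (transcendental_of_one_le_deg (deg_mobius hdet').ge)]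
  have hD : C a - C c * X ≠ 0 := by
    have : algebraMap K[X] (RatFunc K) (Polynomial.C (-c) * Polynomial.X + Polynomial.C a)
        = C a - C c * X := by simp [sub_eq_add_neg, add_comm]
    have hca : -c ≠ 0 ∨ a ≠ 0 := by
      by_contra! h
      simp [neg_eq_zero.mp h.1, h.2] at hdet
    exact this ▸ algebraMap_ne_zero (C_mul_X_add_C_ne_zero hca)
  have hv : mobius d (-b) (-c) a = (C d * X - C b) / (C a - C c * X) := by
    simp [mobius, sub_eq_add_neg, add_comm]
  have hnum : C a * ((C d * X - C b) / (C a - C c * X)) + C b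
      = C (a * d - b * c) * X / (C a - C c * X) := by
    rw [mul_div_assoc', div_add' _ _ _ hD]
    congr 1
    simp only [map_sub, map_mul]
    ring
  have hden : C c * ((C d * X - C b) / (C a - C c * X)) + C d
      = C (a * d - b * c) / (C a - C c * X) := by
    rw [mul_div_assoc', div_add' _ _ _ hD]
    congr 1
    simp only [map_sub, map_mul]
    ring
  rw [hv, hnum, hden, div_div_div_cancel_right₀ hD,
    mul_div_cancel_left₀ _ ((_root_.map_ne_zero C).mpr hdet)]

theorem exists_mobius_inverse (hdet : a * d - b * c ≠ 0) :
    ∃ v : RatFunc K, v.deg = 1 ∧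
      (mobius a b c d).comp v = X ∧ v.comp (mobius a b c d) = X := by
  have hdet' : d * a - -b * -c ≠ 0 := fun h0 => hdet (by linear_combination h0)
  refine ⟨mobius d (-b) (-c) a, deg_mobius hdet', mobius_comp_mobius hdet, ?_⟩
  simpa using mobius_comp_mobius hdet'

theorem mobius_comp_eq_div {h : RatFunc K} (hh : Transcendental K h) :
    (mobius a b c d).comp h
      = algebraMap K[X] (RatFunc K) (Polynomial.C a * h.num + Polynomial.C b * h.denom)
        / algebraMap K[X] (RatFunc K) (Polynomial.C c * h.num + Polynomial.C d * h.denom) := by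
  have hq := algebraMap_ne_zero h.denom_ne_zero
  have key : ∀ s t : K, C s * h + C t
      = algebraMap K[X] (RatFunc K) (Polynomial.C s * h.num + Polynomial.C t * h.denom)
        / algebraMap K[X] (RatFunc K) h.denom := by
    intro s t
    have e : h * algebraMap K[X] (RatFunc K) h.denom = algebraMap K[X] (RatFunc K) h.num := by
      nth_rw 1 [← h.num_div_denom]
      exact div_mul_cancel₀ _ hq
    rw [eq_div_iff hq, map_add, map_mul, map_mul, algebraMap_C, algebraMap_C, ← e]
    ring
  rw [mobius_comp hh, key, key, div_div_div_cancel_right₀ hq]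

end Mobius

theorem algebraMap_aeval_homogenize (h : RatFunc K) {r : K[X]} {n : ℕ} (hr : r.natDegree ≤ n) :
    algebraMap K[X] (RatFunc K) (MvPolynomial.aeval ![h.num, h.denom] (r.homogenize n))
      = aeval h r * algebraMap K[X] (RatFunc K) h.denom ^ n := by
  rw [← IsScalarTower.coe_toAlgHom' K, MvPolynomial.comp_aeval_apply,
    aeval_homogenize_of_ne_zero hr (by simpa using h.denom_ne_zero)]
  simp [num_div_denom]

theorem comp_eq_div_aeval_homogenize (g h : RatFunc K) :
    g.comp h = algebraMap K[X] (RatFunc K)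
        (MvPolynomial.aeval ![h.num, h.denom] (g.num.homogenize g.deg))
      / algebraMap K[X] (RatFunc K)
        (MvPolynomial.aeval ![h.num, h.denom] (g.denom.homogenize g.deg)) := by
  rw [algebraMap_aeval_homogenize h g.natDegree_num_le_deg,
    algebraMap_aeval_homogenize h g.natDegree_denom_le_deg,
    mul_div_mul_right _ _ (pow_ne_zero _ (algebraMap_ne_zero h.denom_ne_zero)), comp]

theorem aeval_homogenize_denom_ne_zero (g : RatFunc K) {h : RatFunc K} (hh : Transcendental K h) :
    MvPolynomial.aeval ![h.num, h.denom] (g.denom.homogenize g.deg) ≠ 0 := by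
  intro h0
  have := algebraMap_aeval_homogenize h g.natDegree_denom_le_deg
  rw [h0, map_zero, eq_comm] at this
  exact mul_ne_zero (fun h' => g.denom_ne_zero (transcendental_iff.mp hh _ h'))
    (pow_ne_zero _ (algebraMap_ne_zero h.denom_ne_zero)) this

/-- Homogeneous coordinates of the value `h(0) ∈ ℙ¹`. -/
noncomputable def valueAtZero (h : RatFunc K) : Fin 2 → K := ![h.num.eval 0, h.denom.eval 0]

/-- Homogeneous coordinates of the value `h(∞) ∈ ℙ¹`. -/
noncomputable def valueAtInfty (h : RatFunc K) : Fin 2 → K :=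
  ![h.num.coeff h.deg, h.denom.coeff h.deg]

theorem valueAtZero_ne_zero (h : RatFunc K) : h.valueAtZero ≠ 0 := by
  simpa [valueAtZero, or_iff_not_and_not] using
    aeval_ne_zero_of_isCoprime h.isCoprime_num_denom (0 : K)

theorem valueAtInfty_ne_zero (h : RatFunc K) : h.valueAtInfty ≠ 0 := by
  simp only [valueAtInfty, deg, ne_eq, Matrix.cons_eq_zero_iff, Matrix.zero_empty, and_true,
    not_and]
  rcases le_or_gt h.num.natDegree h.denom.natDegree with hle | hlt
  · rw [max_eq_right hle]
    exact fun _ => leadingCoeff_ne_zero.mpr h.denom_ne_zero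
  · rw [max_eq_left hlt.le]
    exact fun hc => absurd hc (leadingCoeff_ne_zero.mpr (ne_zero_of_natDegree_gt hlt))

theorem IsNormalForm.eval_homogenize_of_comp {g h : RatFunc K} (hh : Transcendental K h)
    (hgh : (g.comp h).IsNormalForm) :
    MvPolynomial.eval h.valueAtZero (g.num.homogenize g.deg) = 0 ∧
      MvPolynomial.eval h.valueAtInfty (g.denom.homogenize g.deg) = 0 := by
  obtain ⟨hN0, hlt⟩ := hgh.eval_eq_zero_and_natDegree_lt
    (aeval_homogenize_denom_ne_zero g hh) (comp_eq_div_aeval_homogenize g h)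
  refine ⟨by rwa [eval_zero_mvPolynomial_aeval] at hN0, ?_⟩
  rw [valueAtInfty, ← coeff_aeval_homogenize _ _ h.natDegree_num_le_deg h.natDegree_denom_le_deg]
  exact coeff_eq_zero_of_natDegree_lt <| hlt.trans_le <|
    natDegree_aeval_homogenize_le _ _ h.natDegree_num_le_deg h.natDegree_denom_le_deg

theorem mul_sub_mul_ne_zero_of_eval_homogenize (g : RatFunc K) {x y : Fin 2 → K} (hx : x ≠ 0)
    (hy : y ≠ 0) (hgx : MvPolynomial.eval x (g.num.homogenize g.deg) = 0)
    (hgy : MvPolynomial.eval y (g.denom.homogenize g.deg) = 0) :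
    x 0 * y 1 - x 1 * y 0 ≠ 0 := by
  have hx' := Fin.exists_fin_two.mp (Function.ne_iff.mp hx)
  have hy' := Fin.exists_fin_two.mp (Function.ne_iff.mp hy)
  simp only [Pi.zero_apply] at hx' hy'
  by_cases hx1 : x 1 = 0 <;> by_cases hy1 : y 1 = 0
  · have hx0 := hx'.resolve_right (not_not.mpr hx1)
    have hy0 := hy'.resolve_right (not_not.mpr hy1)
    rw [eval_homogenize_of_eq_zero _ _ hx1] at hgx
    rw [eval_homogenize_of_eq_zero _ _ hy1] at hgy
    refine absurd ?_ g.valueAtInfty_ne_zero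
    simp [valueAtInfty, (mul_eq_zero.mp hgx).resolve_right (pow_ne_zero _ hx0),
      (mul_eq_zero.mp hgy).resolve_right (pow_ne_zero _ hy0)]
  · simpa [hx1] using And.intro (hx'.resolve_right (not_not.mpr hx1)) hy1
  · simpa [hy1] using And.intro hx1 (hy'.resolve_right (not_not.mpr hy1))
  · rw [eval_homogenize g.natDegree_num_le_deg _ hx1] at hgx
    rw [eval_homogenize g.natDegree_denom_le_deg _ hy1] at hgy
    intro hdet
    have hxy : x 0 / x 1 = y 0 / y 1 := by
      rw [div_eq_div_iff hx1 hy1]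
      linear_combination hdet
    rw [← hxy] at hgy
    simpa [(mul_eq_zero.mp hgx).resolve_right (pow_ne_zero _ hx1),
      (mul_eq_zero.mp hgy).resolve_right (pow_ne_zero _ hy1)] using
      aeval_ne_zero_of_isCoprime g.isCoprime_num_denom (x 0 / x 1)

theorem isNormalForm_mobius_comp {h : RatFunc K} (hh : 1 ≤ h.deg)
    (hdet : h.valueAtZero 0 * h.valueAtInfty 1 - h.valueAtZero 1 * h.valueAtInfty 0 ≠ 0) :
    ((mobius (h.valueAtZero 1) (-h.valueAtZero 0) (h.valueAtInfty 1) (-h.valueAtInfty 0)).comp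
      h).IsNormalForm := by
  set x := h.valueAtZero
  set y := h.valueAtInfty
  set p := Polynomial.C (x 1) * h.num + Polynomial.C (-x 0) * h.denom
  set q := Polynomial.C (y 1) * h.num + Polynomial.C (-y 0) * h.denom
  have hp0 : p.eval 0 = 0 := by simp [p, x, valueAtZero]; ring
  have hq0 : q.eval 0 ≠ 0 := by
    convert hdet using 1
    simp [q, x, valueAtZero]
    ring
  have hpd : p.coeff h.deg ≠ 0 := by
    convert neg_ne_zero.mpr hdet using 1
    simp [p, y, valueAtInfty]
    ring
  have hqd : q.coeff h.deg = 0 := by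
    simp [q, y, valueAtInfty]
    ring
  have hq_le : q.natDegree ≤ h.deg := natDegree_add_le_of_degree_le
    ((natDegree_C_mul_le _ _).trans h.natDegree_num_le_deg)
    ((natDegree_C_mul_le _ _).trans h.natDegree_denom_le_deg)
  refine isNormalForm_of_eq_div (mobius_comp_eq_div (transcendental_of_one_le_deg hh))
    hp0 hq0 ?_
  exact (natDegree_lt_of_coeff_eq_zero (fun h0 => hq0 (by simp [h0])) hq_le hqd).trans_le
    (le_natDegree_of_ne_zero hpd)

theorem IsNormalForm.of_comp {g h : RatFunc K} (hh : h.IsNormalForm)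
    (hgh : (g.comp h).IsNormalForm) : g.IsNormalForm := by
  obtain ⟨hg0, hginf⟩ :=
    hgh.eval_homogenize_of_comp (transcendental_of_one_le_deg (one_le_deg_of_isNormalForm hh))
  have hx0 : h.valueAtZero 0 = 0 := hh.2
  have hx1 : h.valueAtZero 1 ≠ 0 := fun h1 =>
    h.valueAtZero_ne_zero (by ext i; fin_cases i <;> simp [hx0, h1])
  have hy1 : h.valueAtInfty 1 = 0 := by
    simp only [valueAtInfty, deg, max_eq_left hh.1.le, Matrix.cons_val_one, Matrix.cons_val_fin_one]
    exact coeff_eq_zero_of_natDegree_lt hh.1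
  have hy0 : h.valueAtInfty 0 ≠ 0 := fun h0 =>
    h.valueAtInfty_ne_zero (by ext i; fin_cases i <;> simp [hy1, h0])
  rw [eval_homogenize g.natDegree_num_le_deg _ hx1, hx0, zero_div] at hg0
  rw [eval_homogenize_of_eq_zero _ _ hy1] at hginf
  have hlt := natDegree_lt_of_coeff_eq_zero g.denom_ne_zero g.natDegree_denom_le_deg
    ((mul_eq_zero.mp hginf).resolve_right (pow_ne_zero _ hy0))
  exact ⟨by simpa [deg, lt_max_iff] using hlt,
    (mul_eq_zero.mp hg0).resolve_right (pow_ne_zero _ hx1)⟩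

end RatFunc

theorem decomposition_equiv_normalForm_general {K : Type*} [Field K] (f g h : RatFunc K)
    (hf : f.IsNormalForm) (hh : 1 ≤ h.deg) (hcomp : f = g.comp h) :
    ∃ u v : RatFunc K, u.deg = 1 ∧ v.deg = 1 ∧
      u.comp v = RatFunc.X ∧ v.comp u = RatFunc.X ∧
      (g.comp v).IsNormalForm ∧ (u.comp h).IsNormalForm ∧
      f = (g.comp v).comp (u.comp h) := by
  set x := h.valueAtZero
  set y := h.valueAtInfty
  have hh' := RatFunc.transcendental_of_one_le_deg hh
  obtain ⟨hgx, hgy⟩ := (hcomp ▸ hf).eval_homogenize_of_comp hh'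
  have hdet : x 0 * y 1 - x 1 * y 0 ≠ 0 :=
    g.mul_sub_mul_ne_zero_of_eval_homogenize h.valueAtZero_ne_zero h.valueAtInfty_ne_zero hgx hgy
  have hdet' : x 1 * -y 0 - -x 0 * y 1 ≠ 0 := fun h0 => hdet (by linear_combination h0)
  set u := RatFunc.mobius (x 1) (-x 0) (y 1) (-y 0)
  have hu : u.deg = 1 := RatFunc.deg_mobius hdet'
  obtain ⟨v, hv, huv, hvu⟩ := RatFunc.exists_mobius_inverse hdet'
  have huh : (u.comp h).IsNormalForm := RatFunc.isNormalForm_mobius_comp hh hdet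
  have hfactor : f = (g.comp v).comp (u.comp h) := by
    rw [RatFunc.comp_assoc g (RatFunc.transcendental_of_one_le_deg hv.ge)
        (RatFunc.transcendental_of_one_le_deg (RatFunc.one_le_deg_of_isNormalForm huh)),
      ← RatFunc.comp_assoc v (RatFunc.transcendental_of_one_le_deg hu.ge) hh', hvu,
      RatFunc.X_comp, hcomp]
  refine ⟨u, v, hu, hv, huv, hvu, RatFunc.IsNormalForm.of_comp huh ?_, huh, hfactor⟩
  rwa [← hfactor]

/-- Theorem 4(ii): every decomposition of a rational function in normal form is
equivalent to one where both components are in normal form. -/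
theorem decomposition_equiv_normalForm {K : Type*} [Field K] (f g h : RatFunc K)
    (hf : f.IsNormalForm) (hg : 1 ≤ g.deg) (hh : 1 ≤ h.deg) (hcomp : f = g.comp h) :
    ∃ u v : RatFunc K, u.deg = 1 ∧ v.deg = 1 ∧
      u.comp v = RatFunc.X ∧ v.comp u = RatFunc.X ∧
      (g.comp v).IsNormalForm ∧ (u.comp h).IsNormalForm ∧
      f = (g.comp v).comp (u.comp h) :=
  decomposition_equiv_normalForm_general f g h hf hh hcomp
end

section
/- Let K be a field, f ∈ K(x) in normal form of degree m ≥ 1, and let a, b, c, d ∈ K with ad − bc ≠ 0 define the unit u = (aX+b)/(cX+d) ∈ K(x). Assume f∘u = f. Then: (i) a ≠ 0 and d ≠ 0; (ii) f.num.eval(b/d) = 0; (iii) if c ≠ 0, then f.denom.eval(a/c) = 0. -/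
open Polynomial

/-!
Let `n = deg f.num > m = deg f.denom`, let `P`, `Q` be the binary forms of degrees `n`, `m`
homogenizing `f.num`, `f.denom`, and let `M = (a x₀ + b x₁, c x₀ + d x₁)`. Clearing denominators
in `f ∘ u = f` gives an identity of binary forms of degree `2n`,
`P(M) · Q · x₁ ^ (n - m) = P · M₁ ^ (n - m) · Q(M)`,
to be evaluated at the points `(0 : 1)` and `(1 : 0)` of the projective line, i.e. at `0` and `∞`.

At `(0 : 1)` the right side vanishes because `f.num (0) = 0`, while `f.denom (0) ≠ 0` by
coprimality; hence `P(b, d) = 0`, which forces `d ≠ 0` (else also `b = 0`) and then reads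
`f.num (b / d) = 0`. At `(1 : 0)` the left side vanishes because `n > m`, so
`c ^ (n - m) · Q(a, c) = 0`, i.e. `f.denom (a / c) = 0` when `c ≠ 0`. Finally `a = 0` would force
`c ≠ 0` and `f.denom (0) = 0`, contradicting coprimality again.
-/

namespace Polynomial

lemma eval_homogenize_of_snd_eq_zero {R : Type*} [CommSemiring R] (p : R[X]) (n : ℕ)
    {x : Fin 2 → R} (hx : x 1 = 0) :
    MvPolynomial.eval x (p.homogenize n) = p.coeff n * x 0 ^ n := by
  rw [homogenize, map_sum, Finset.sum_eq_single (n, 0)]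
  · simp [MvPolynomial.eval_monomial]
  · rintro ⟨i, j⟩ hij hne
    have hj : j ≠ 0 := by
      rintro rfl
      simp_all
    rw [MvPolynomial.eval_monomial, Finsupp.prod, Finset.prod_eq_zero (i := 1) (by simp [hj])
      (by simp [hx, hj]), mul_zero]
  · simp

lemma aeval_homogenize {R A : Type*} [CommSemiring R] [Semifield A] [Algebra R A] {p : R[X]}
    {n : ℕ} (hn : p.natDegree ≤ n) (x : Fin 2 → A) (hx : x 1 ≠ 0) :
    MvPolynomial.aeval x (p.homogenize n) = aeval (x 0 / x 1) p * x 1 ^ n := by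
  rw [MvPolynomial.aeval_def, ← MvPolynomial.eval_map, ← homogenize_map,
    eval_homogenize (natDegree_map_le.trans hn) x hx, eval_map_algebraMap]

end Polynomial

lemma MvPolynomial.IsHomogeneous.eq_of_aeval_eq {R A : Type*} [CommRing R] [CommRing A]
    [Algebra R A] {F G : MvPolynomial (Fin 2) R} {N : ℕ} (hF : F.IsHomogeneous N)
    (hG : G.IsHomogeneous N) {x : A} (hx : Transcendental R x)
    (h : MvPolynomial.aeval ![x, 1] F = MvPolynomial.aeval ![x, 1] G) : F = G := by
  have hX : ∀ H : MvPolynomial (Fin 2) R, MvPolynomial.aeval ![x, 1] H =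
      Polynomial.aeval x (MvPolynomial.aeval ![(Polynomial.X : R[X]), 1] H) := by
    intro H
    rw [comp_aeval_apply]
    congr 1
    ext i
    fin_cases i <;> simp
  have h' : MvPolynomial.aeval ![(Polynomial.X : R[X]), 1] F =
      MvPolynomial.aeval ![Polynomial.X, 1] G :=
    transcendental_iff_injective.mp hx (by simpa only [hX] using h)
  exact (homogenize_eq_of_isHomogeneous hF rfl).symm.trans
    (h' ▸ homogenize_eq_of_isHomogeneous hG rfl)

section Mobius

variable {K : Type*} [Field K]

/-- The pair of linear forms homogenizing `x ↦ (a x + b) / (c x + d)`. -/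
noncomputable def mobiusForms (a b c d : K) : Fin 2 → MvPolynomial (Fin 2) K :=
  ![MvPolynomial.C a * MvPolynomial.X 0 + MvPolynomial.C b * MvPolynomial.X 1,
    MvPolynomial.C c * MvPolynomial.X 0 + MvPolynomial.C d * MvPolynomial.X 1]

lemma MvPolynomial.IsHomogeneous.aeval_mobiusForms {F : MvPolynomial (Fin 2) K} {n : ℕ}
    (hF : F.IsHomogeneous n) (a b c d : K) :
    (MvPolynomial.aeval (mobiusForms a b c d) F).IsHomogeneous n := by
  simpa using hF.aeval (mobiusForms a b c d) (n := 1) fun i => by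
    fin_cases i <;> exact (isHomogeneous_C_mul_X _ _).add (isHomogeneous_C_mul_X _ _)

lemma aeval_aeval_mobiusForms {A : Type*} [CommRing A] [Algebra K A] (a b c d : K)
    (F : MvPolynomial (Fin 2) K) (x : Fin 2 → A) :
    MvPolynomial.aeval x (MvPolynomial.aeval (mobiusForms a b c d) F) =
      MvPolynomial.aeval ![a • x 0 + b • x 1, c • x 0 + d • x 1] F := by
  rw [MvPolynomial.comp_aeval_apply]
  congr 1
  ext i
  fin_cases i <;> simp [mobiusForms, Algebra.smul_def]

theorem homogenize_cross_eq_of_aeval_cross_eq {a b c d : K} {u : RatFunc K}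
    (hu : u = (RatFunc.C a * RatFunc.X + RatFunc.C b) / (RatFunc.C c * RatFunc.X + RatFunc.C d))
    (hcd : RatFunc.C c * RatFunc.X + RatFunc.C d ≠ 0) {p q : K[X]} {n m : ℕ}
    (hp : p.natDegree ≤ n) (hq : q.natDegree ≤ m) (hmn : m ≤ n)
    (h : aeval u p * algebraMap K[X] (RatFunc K) q = algebraMap K[X] (RatFunc K) p * aeval u q) :
    MvPolynomial.aeval (mobiusForms a b c d) (p.homogenize n) * q.homogenize m *
        MvPolynomial.X 1 ^ (n - m) =
      p.homogenize n * mobiusForms a b c d 1 ^ (n - m) *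
        MvPolynomial.aeval (mobiusForms a b c d) (q.homogenize m) := by
  subst hu
  have hHp := isHomogeneous_homogenize (n := n) p
  have hHq := isHomogeneous_homogenize (n := m) q
  have hM1 : (mobiusForms a b c d 1).IsHomogeneous 1 :=
    (MvPolynomial.isHomogeneous_C_mul_X _ _).add (MvPolynomial.isHomogeneous_C_mul_X _ _)
  refine MvPolynomial.IsHomogeneous.eq_of_aeval_eq (N := n + m + (n - m))
    ((hHp.aeval_mobiusForms a b c d).mul hHq |>.mul (MvPolynomial.isHomogeneous_X_pow _ _))
    ?_ RatFunc.transcendental_X ?_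
  · rw [add_right_comm]
    simpa using (hHp.mul (hM1.pow (n - m))).mul (hHq.aeval_mobiusForms a b c d)
  -- At `(X : 1)` both sides become `h` multiplied by `(c X + d) ^ n`.
  have hD : c • RatFunc.X + d • (1 : RatFunc K) ≠ 0 := by
    simpa [Algebra.smul_def] using hcd
  simp only [map_mul, map_pow, aeval_aeval_mobiusForms, Matrix.cons_val_zero,
    Matrix.cons_val_one]
  rw [aeval_homogenize hp ![_, _] hD, aeval_homogenize hq ![_, _] hD,
    aeval_homogenize hp ![_, _] one_ne_zero, aeval_homogenize hq ![_, _] one_ne_zero]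
  simp only [Matrix.cons_val_zero, Matrix.cons_val_one, Algebra.smul_def, RatFunc.algebraMap_eq_C,
    mobiusForms, div_one, one_pow, mul_one, RatFunc.aeval_X_left_eq_algebraMap, map_add, map_mul,
    MvPolynomial.aeval_C, MvPolynomial.aeval_X]
  rw [← pow_sub_mul_pow _ hmn]
  linear_combination (RatFunc.C c * RatFunc.X + RatFunc.C d) ^ (n - m) *
    (RatFunc.C c * RatFunc.X + RatFunc.C d) ^ m * h

namespace RatFunc

lemma C_mul_X_add_C_ne_zero {c d : K} (h : c ≠ 0 ∨ d ≠ 0) : C c * X + C d ≠ 0 := by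
  rw [← algebraMap_C, ← algebraMap_X, ← map_mul, ← algebraMap_C, ← map_add]
  refine algebraMap_ne_zero fun h0 => ?_
  have h1 := congrArg (coeff · 1) h0
  have h0 := congrArg (coeff · 0) h0
  simp only [coeff_add, coeff_C_mul_X, coeff_C, coeff_zero] at h1 h0
  simp_all

lemma aeval_num_mul_denom_eq_of_comp_eq {f u : RatFunc K} (hf : f ≠ 0) (h : f.comp u = f) :
    aeval u f.num * algebraMap K[X] (RatFunc K) f.denom =
      algebraMap K[X] (RatFunc K) f.num * aeval u f.denom := by
  have hq : aeval u f.denom ≠ 0 := by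
    intro h0
    rw [RatFunc.comp, h0, div_zero] at h
    exact hf h.symm
  rw [← div_eq_div_iff hq (algebraMap_ne_zero f.denom_ne_zero), num_div_denom]
  exact h

lemma eval_denom_ne_zero_of_eval_num_eq_zero (f : RatFunc K) {x : K} (hx : f.num.eval x = 0) :
    f.denom.eval x ≠ 0 := by
  obtain ⟨v, w, hvw⟩ := f.isCoprime_num_denom
  intro h
  simpa [hx, h] using congrArg (Polynomial.eval x) hvw

lemma IsNormalForm.ne_zero {f : RatFunc K} (hf : f.IsNormalForm) : f ≠ 0 := by
  rintro rfl
  simpa using hf.1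

theorem IsNormalForm.eval_homogenize_eq_zero_of_comp_eq {f : RatFunc K} (hf : f.IsNormalForm)
    {a b c d : K} {u : RatFunc K} (hu : u = (C a * X + C b) / (C c * X + C d))
    (hcd : C c * X + C d ≠ 0) (hfix : f.comp u = f) :
    MvPolynomial.eval ![b, d] (f.num.homogenize f.num.natDegree) = 0 ∧
      (c ≠ 0 → MvPolynomial.eval ![a, c] (f.denom.homogenize f.denom.natDegree) = 0) := by
  have key := homogenize_cross_eq_of_aeval_cross_eq hu hcd le_rfl le_rfl hf.1.le
    (aeval_num_mul_denom_eq_of_comp_eq hf.ne_zero hfix)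
  have at0 :
      MvPolynomial.eval ![b, d] (f.num.homogenize f.num.natDegree) * f.denom.eval 0 = 0 := by
    have := congrArg (MvPolynomial.aeval ![(0 : K), 1]) key
    simp only [map_mul, map_pow, aeval_aeval_mobiusForms] at this
    rw [aeval_homogenize le_rfl ![0, 1] one_ne_zero, aeval_homogenize le_rfl ![0, 1] one_ne_zero]
      at this
    simpa [hf.2] using this
  have atInf : f.num.leadingCoeff * c ^ (f.num.natDegree - f.denom.natDegree) *
      MvPolynomial.eval ![a, c] (f.denom.homogenize f.denom.natDegree) = 0 := by
    have := congrArg (MvPolynomial.aeval ![(1 : K), 0]) key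
    simp only [map_mul, map_pow, aeval_aeval_mobiusForms] at this
    simpa [eval_homogenize_of_snd_eq_zero, mobiusForms, zero_pow (Nat.sub_ne_zero_of_lt hf.1),
      eq_comm] using this
  have hq0 := f.eval_denom_ne_zero_of_eval_num_eq_zero hf.2
  exact ⟨(mul_eq_zero.mp at0).resolve_right hq0, fun hc => by simpa [hc, hf.ne_zero] using atInf⟩

end RatFunc

end Mobius

theorem fixing_unit_properties_general {K : Type*} [Field K]
    (f : RatFunc K) (hf : f.IsNormalForm)
    (a b c d : K) (habcd : a * d - b * c ≠ 0)
    (u : RatFunc K)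
    (hu : u = (RatFunc.C a * RatFunc.X + RatFunc.C b) /
        (RatFunc.C c * RatFunc.X + RatFunc.C d))
    (hfix : f.comp u = f) :
    a ≠ 0 ∧ d ≠ 0 ∧ f.num.eval (b / d) = 0 ∧ (c ≠ 0 → f.denom.eval (a / c) = 0) := by
  have hcd := RatFunc.C_mul_X_add_C_ne_zero (c := c) (d := d) (by
    contrapose! habcd
    simp [habcd])
  obtain ⟨hnum, hdenom⟩ := hf.eval_homogenize_eq_zero_of_comp_eq hu hcd hfix
  have hd : d ≠ 0 := by
    rintro rfl
    have hb : f.num.leadingCoeff * b ^ f.num.natDegree = 0 := by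
      simpa [eval_homogenize_of_snd_eq_zero] using hnum
    obtain ⟨rfl, -⟩ : b = 0 ∧ _ := by simpa [hf.ne_zero] using hb
    simp at habcd
  have hdenom' : c ≠ 0 → f.denom.eval (a / c) = 0 := fun hc => by
    simpa [eval_homogenize le_rfl ![a, c] hc, hc] using hdenom hc
  refine ⟨fun ha => ?_, hd, by simpa [eval_homogenize le_rfl ![b, d] hd, hd] using hnum, hdenom'⟩
  subst ha
  have hc : c ≠ 0 := by
    rintro rfl
    simp at habcd
  exact f.eval_denom_ne_zero_of_eval_num_eq_zero hf.2 (by simpa using hdenom' hc)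

/-- If `f` is in normal form and the Möbius transformation `u = (aX+b)/(cX+d)` fixes `f`
under composition, then `a ≠ 0`, `d ≠ 0`, `b/d` is a root of the numerator of `f`, and if
`c ≠ 0` then `a/c` is a root of the denominator of `f`. -/
theorem fixing_unit_properties {K : Type*} [Field K]
    (f : RatFunc K) (hf1 : 1 ≤ f.deg) (hf : f.IsNormalForm)
    (a b c d : K) (habcd : a * d - b * c ≠ 0)
    (u : RatFunc K)
    (hu : u = (RatFunc.C a * RatFunc.X + RatFunc.C b) /
        (RatFunc.C c * RatFunc.X + RatFunc.C d))
    (hfix : f.comp u = f) :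
    a ≠ 0 ∧ d ≠ 0 ∧ f.num.eval (b / d) = 0 ∧ (c ≠ 0 → f.denom.eval (a / c) = 0) :=
  fixing_unit_properties_general f hf a b c d habcd u hu hfix
end
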